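/- arXiv:2103.15818 — 4 statements merged into one kernel-verified Lean document; each statement's English description precedes it below -/
import Mathlib

section
/- Let z be a trace-free symmetric bilinear form on E and u ∈ E. Then the structural 3-tensor T satisfies |T|² = (2/(n−2)²) ( |u|² |z|² − (n/(n−1)) |i_u z|² ). In particular, if u ≠ 0 and N = u/|u|, then |T|² = (2/(n−2)²) |u|² ( |z|² − (n/(n−1)) |i_N z|² ). -/
open scoped RealInnerProductSpace

/-- Wedge product of a 1-form `w` and a 2-form `b`:
`(w ∧ b)(X,Y,Z) = w(X) b(Y,Z) − w(Y) b(X,Z)`. -/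
noncomputable def wedge3 {E : Type*} (w : E → ℝ) (b : E → E → ℝ) : E → E → E → ℝ :=
  fun X Y Z => w X * b Y Z - w Y * b X Z

/-- The structural 3-tensor
`T = (1/(n−2)) u♭ ∧ z + (1/((n−1)(n−2))) (i_u z) ∧ g`. -/
noncomputable def Ttensor {E : Type*} [NormedAddCommGroup E] [InnerProductSpace ℝ E]
    (n : ℕ) (z : E → E → ℝ) (u : E) : E → E → E → ℝ :=
  fun X Y Z =>
    (1 / ((n : ℝ) - 2)) * wedge3 (fun x => ⟪u, x⟫) z X Y Z
      + (1 / (((n : ℝ) - 1) * ((n : ℝ) - 2))) *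
          wedge3 (fun x => z u x) (fun x y => ⟪x, y⟫) X Y Z

open Finset

private lemma key {n : ℕ} (a v : Fin n → ℝ) (Z : Fin n → Fin n → ℝ)
    (hZ : ∀ i j, Z i j = Z j i) (htr : ∑ i, Z i i = 0)
    (hv : ∀ k, v k = ∑ j, a j * Z j k) (c1 c2 : ℝ) :
    ∑ i, ∑ j, ∑ k, (c1 * (a i * Z j k - a j * Z i k)
        + c2 * (v i * (if j = k then (1:ℝ) else 0)
                - v j * (if i = k then (1:ℝ) else 0))) ^ 2
      = 2 * c1^2 * (∑ i, (a i)^2) * (∑ i, ∑ j, (Z i j)^2)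
        + (2*(n:ℝ)*c2^2 - 2*c2^2 - 2*c1^2 - 4*c1*c2) * (∑ i, (v i)^2) := by
  set D : Fin n → Fin n → ℝ := fun i j => if i = j then 1 else 0 with hD
  have hD2 : ∀ i j, (D i j)^2 = D i j := by
    intro i j; simp only [hD]; split <;> norm_num
  have S1 : ∑ i, ∑ j, ∑ k, ((a i)^2 * (Z j k)^2)
      = (∑ i, (a i)^2) * (∑ i, ∑ j, (Z i j)^2) := by
    rw [Finset.sum_mul]
    exact Finset.sum_congr rfl fun i _ => by simp only [← Finset.mul_sum]
  have S2 : ∑ i, ∑ j, ∑ k, ((a j)^2 * (Z i k)^2)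
      = (∑ i, (a i)^2) * (∑ i, ∑ j, (Z i j)^2) := by
    rw [Finset.sum_comm, Finset.sum_mul]
    exact Finset.sum_congr rfl fun j _ => by simp only [← Finset.mul_sum]
  have S3 : ∑ i, ∑ j, ∑ k, ((v i)^2 * (D j k)^2) = (n:ℝ) * ∑ i, (v i)^2 := by
    simp only [hD2]
    have h1 : ∀ j : Fin n, ∑ k, D j k = 1 := by intro j; simp [hD]
    calc ∑ i : Fin n, ∑ j, ∑ k, (v i)^2 * D j k
        = ∑ i : Fin n, ∑ j : Fin n, (v i)^2 := by
          exact Finset.sum_congr rfl fun i _ => Finset.sum_congr rfl fun j _ => by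
            rw [← Finset.mul_sum, h1, mul_one]
      _ = (n:ℝ) * ∑ i, (v i)^2 := by
          simp [Finset.sum_const, card_univ, mul_comm, Finset.mul_sum]
  have S4 : ∑ i, ∑ j, ∑ k, ((v j)^2 * (D i k)^2) = (n:ℝ) * ∑ i, (v i)^2 := by
    simp only [hD2]
    have h1 : ∀ i : Fin n, ∑ k, D i k = 1 := by intro i; simp [hD]
    calc ∑ i : Fin n, ∑ j, ∑ k, (v j)^2 * D i k
        = ∑ i : Fin n, ∑ j : Fin n, (v j)^2 := by
          exact Finset.sum_congr rfl fun i _ => Finset.sum_congr rfl fun j _ => by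
            rw [← Finset.mul_sum, h1, mul_one]
      _ = (n:ℝ) * ∑ i, (v i)^2 := by
          rw [Finset.sum_const, card_univ, Fintype.card_fin, nsmul_eq_mul]
  have S5 : ∑ i, ∑ j, ∑ k, (a i * Z j k * (a j * Z i k)) = ∑ k, (v k)^2 := by
    have hswap : ∑ i, ∑ j, ∑ k, (a i * Z j k * (a j * Z i k))
        = ∑ k, ∑ i, ∑ j, (a i * Z j k * (a j * Z i k)) := by
      calc ∑ i, ∑ j, ∑ k, (a i * Z j k * (a j * Z i k))
          = ∑ i, ∑ k, ∑ j, (a i * Z j k * (a j * Z i k)) :=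
            Finset.sum_congr rfl fun i _ => by rw [Finset.sum_comm]
        _ = ∑ k, ∑ i, ∑ j, (a i * Z j k * (a j * Z i k)) := by rw [Finset.sum_comm]
    rw [hswap]
    refine Finset.sum_congr rfl fun k _ => ?_
    have h2 : ∑ i, ∑ j, (a i * Z j k * (a j * Z i k))
        = (∑ i, a i * Z i k) * (∑ j, a j * Z j k) := by
      rw [Finset.sum_mul_sum]
      exact Finset.sum_congr rfl fun i _ => Finset.sum_congr rfl fun j _ => by ring
    rw [h2, ← hv, sq]
  have S6 : ∑ i, ∑ j, ∑ k, (a i * Z j k * v i * D j k) = 0 := by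
    have hin : ∀ j : Fin n, ∑ k, Z j k * D j k = Z j j := by
      intro j; simp [hD, mul_ite, Finset.sum_ite_eq]
    calc ∑ i, ∑ j, ∑ k, (a i * Z j k * v i * D j k)
        = ∑ i, (a i * v i) * ∑ j, Z j j := by
          refine Finset.sum_congr rfl fun i _ => ?_
          rw [Finset.mul_sum]
          refine Finset.sum_congr rfl fun j _ => ?_
          rw [← hin j, Finset.mul_sum]
          exact Finset.sum_congr rfl fun k _ => by ring
      _ = 0 := by rw [htr]; simp
  have S9 : ∑ i, ∑ j, ∑ k, (a j * Z i k * v j * D i k) = 0 := by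
    have hin : ∀ i : Fin n, ∑ k, Z i k * D i k = Z i i := by
      intro i; simp [hD, mul_ite, Finset.sum_ite_eq]
    calc ∑ i, ∑ j, ∑ k, (a j * Z i k * v j * D i k)
        = ∑ i, (∑ j, a j * v j) * (Z i i) := by
          refine Finset.sum_congr rfl fun i _ => ?_
          rw [Finset.sum_mul]
          refine Finset.sum_congr rfl fun j _ => ?_
          rw [← hin i, Finset.mul_sum]
          exact Finset.sum_congr rfl fun k _ => by ring
      _ = 0 := by rw [← Finset.mul_sum, htr, mul_zero]
  have S7 : ∑ i, ∑ j, ∑ k, (a i * Z j k * v j * D i k) = ∑ i, (v i)^2 := by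
    have hcol : ∀ i j : Fin n, ∑ k, (a i * Z j k * v j * D i k) = a i * Z j i * v j := by
      intro i j
      simp [hD, mul_ite, Finset.sum_ite_eq]
    simp only [hcol]
    rw [Finset.sum_comm]
    refine Finset.sum_congr rfl fun j _ => ?_
    have : ∀ i : Fin n, a i * Z j i * v j = (a i * Z i j) * v j := by
      intro i; rw [hZ j i]
    simp only [this]
    rw [← Finset.sum_mul, ← hv, sq]
  have S8 : ∑ i, ∑ j, ∑ k, (a j * Z i k * v i * D j k) = ∑ i, (v i)^2 := by
    have hcol : ∀ i j : Fin n, ∑ k, (a j * Z i k * v i * D j k) = a j * Z i j * v i := by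
      intro i j
      simp [hD, mul_ite, Finset.sum_ite_eq]
    simp only [hcol]
    refine Finset.sum_congr rfl fun i _ => ?_
    have : ∀ j : Fin n, a j * Z i j * v i = (a j * Z j i) * v i := by
      intro j; rw [hZ i j]
    simp only [this]
    rw [← Finset.sum_mul, ← hv, sq]
  have S10 : ∑ i, ∑ j, ∑ k, (v i * D j k * (v j * D i k)) = ∑ i, (v i)^2 := by
    have hcol : ∀ i j : Fin n, ∑ k, (v i * D j k * (v j * D i k))
        = v i * v j * D i j := by
      intro i j
      simp only [hD, mul_ite, ite_mul, mul_one, mul_zero, zero_mul, one_mul]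
      rw [Finset.sum_ite_eq]
      simp [eq_comm]
    simp only [hcol]
    refine Finset.sum_congr rfl fun i _ => ?_
    have : ∀ j : Fin n, v i * v j * D i j = if i = j then v i * v j else 0 := by
      intro j; simp [hD, mul_ite]
    simp only [this, Finset.sum_ite_eq, mem_univ, if_true, sq]
  have expand : ∀ i j k : Fin n,
      (c1 * (a i * Z j k - a j * Z i k)
        + c2 * (v i * (if j = k then (1:ℝ) else 0)
                - v j * (if i = k then (1:ℝ) else 0))) ^ 2
      = c1^2 * ((a i)^2 * (Z j k)^2) + c1^2 * ((a j)^2 * (Z i k)^2)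
        + c2^2 * ((v i)^2 * (D j k)^2) + c2^2 * ((v j)^2 * (D i k)^2)
        - 2*c1^2 * (a i * Z j k * (a j * Z i k))
        + 2*c1*c2 * (a i * Z j k * v i * D j k)
        - 2*c1*c2 * (a i * Z j k * v j * D i k)
        - 2*c1*c2 * (a j * Z i k * v i * D j k)
        + 2*c1*c2 * (a j * Z i k * v j * D i k)
        - 2*c2^2 * (v i * D j k * (v j * D i k)) := by
    intro i j k
    simp only [hD]
    ring
  calc ∑ i, ∑ j, ∑ k, (c1 * (a i * Z j k - a j * Z i k)
        + c2 * (v i * (if j = k then (1:ℝ) else 0)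
                - v j * (if i = k then (1:ℝ) else 0))) ^ 2
      = ∑ i, ∑ j, ∑ k, (c1^2 * ((a i)^2 * (Z j k)^2) + c1^2 * ((a j)^2 * (Z i k)^2)
        + c2^2 * ((v i)^2 * (D j k)^2) + c2^2 * ((v j)^2 * (D i k)^2)
        - 2*c1^2 * (a i * Z j k * (a j * Z i k))
        + 2*c1*c2 * (a i * Z j k * v i * D j k)
        - 2*c1*c2 * (a i * Z j k * v j * D i k)
        - 2*c1*c2 * (a j * Z i k * v i * D j k)
        + 2*c1*c2 * (a j * Z i k * v j * D i k)
        - 2*c2^2 * (v i * D j k * (v j * D i k))) := by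
        exact Finset.sum_congr rfl fun i _ => Finset.sum_congr rfl fun j _ =>
          Finset.sum_congr rfl fun k _ => expand i j k
    _ = c1^2 * (∑ i, ∑ j, ∑ k, ((a i)^2 * (Z j k)^2))
        + c1^2 * (∑ i, ∑ j, ∑ k, ((a j)^2 * (Z i k)^2))
        + c2^2 * (∑ i, ∑ j, ∑ k, ((v i)^2 * (D j k)^2))
        + c2^2 * (∑ i, ∑ j, ∑ k, ((v j)^2 * (D i k)^2))
        - 2*c1^2 * (∑ i, ∑ j, ∑ k, (a i * Z j k * (a j * Z i k)))
        + 2*c1*c2 * (∑ i, ∑ j, ∑ k, (a i * Z j k * v i * D j k))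
        - 2*c1*c2 * (∑ i, ∑ j, ∑ k, (a i * Z j k * v j * D i k))
        - 2*c1*c2 * (∑ i, ∑ j, ∑ k, (a j * Z i k * v i * D j k))
        + 2*c1*c2 * (∑ i, ∑ j, ∑ k, (a j * Z i k * v j * D i k))
        - 2*c2^2 * (∑ i, ∑ j, ∑ k, (v i * D j k * (v j * D i k))) := by
        simp only [Finset.sum_add_distrib, Finset.sum_sub_distrib, ← Finset.mul_sum]
    _ = 2 * c1^2 * (∑ i, (a i)^2) * (∑ i, ∑ j, (Z i j)^2)
        + (2*(n:ℝ)*c2^2 - 2*c2^2 - 2*c1^2 - 4*c1*c2) * (∑ i, (v i)^2) := by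
        rw [S1, S2, S3, S4, S5, S6, S7, S8, S9, S10]
        ring

/-- for a trace-free symmetric bilinear form `z` and `u ∈ E`,
`|T|² = (2/(n−2)²)(|u|²|z|² − (n/(n−1))|i_u z|²)`; in particular, if `u ≠ 0` and
`N = u/|u|`, then `|T|² = (2/(n−2)²)|u|²(|z|² − (n/(n−1))|i_N z|²)`. -/
theorem normSq_Ttensor {E : Type*} [NormedAddCommGroup E] [InnerProductSpace ℝ E]
    [FiniteDimensional ℝ E] {n : ℕ} (hn : 4 ≤ n) (hdim : Module.finrank ℝ E = n)
    (b : OrthonormalBasis (Fin n) ℝ E)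
    (z : E →ₗ[ℝ] E →ₗ[ℝ] ℝ) (hsym : ∀ x y : E, z x y = z y x)
    (htf : ∑ i, z (b i) (b i) = 0) (u : E) :
    (∑ i, ∑ j, ∑ k, (Ttensor n (fun x y => z x y) u (b i) (b j) (b k)) ^ 2
      = (2 / ((n : ℝ) - 2) ^ 2) *
          (‖u‖ ^ 2 * (∑ i, ∑ j, (z (b i) (b j)) ^ 2)
            - ((n : ℝ) / ((n : ℝ) - 1)) * ∑ i, (z u (b i)) ^ 2)) ∧
    (u ≠ 0 →
      ∑ i, ∑ j, ∑ k, (Ttensor n (fun x y => z x y) u (b i) (b j) (b k)) ^ 2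
        = (2 / ((n : ℝ) - 2) ^ 2) * ‖u‖ ^ 2 *
            ((∑ i, ∑ j, (z (b i) (b j)) ^ 2)
              - ((n : ℝ) / ((n : ℝ) - 1)) * ∑ i, (z (‖u‖⁻¹ • u) (b i)) ^ 2)) := by
  have hn4 : (4:ℝ) ≤ (n:ℝ) := by exact_mod_cast hn
  have hn2 : ((n:ℝ) - 2) ≠ 0 := by linarith
  have hn1 : ((n:ℝ) - 1) ≠ 0 := by linarith
  have hbb : ∀ i j : Fin n, ⟪b i, b j⟫ = if i = j then (1:ℝ) else 0 :=
    fun i j => orthonormal_iff_ite.mp b.orthonormal i j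
  have hZ : ∀ i j : Fin n, z (b i) (b j) = z (b j) (b i) := fun i j => hsym _ _
  have hv : ∀ k : Fin n, z u (b k) = ∑ j, ⟪u, b j⟫ * z (b j) (b k) := by
    intro k
    conv_lhs => rw [← b.sum_repr u]
    simp [LinearMap.sum_apply, map_smul, smul_eq_mul,
      OrthonormalBasis.repr_apply_apply, real_inner_comm]
  have h2 : ∑ i, ⟪u, b i⟫ ^ 2 = ‖u‖ ^ 2 := by
    have := b.sum_inner_mul_inner u u
    rw [← real_inner_self_eq_norm_sq]
    rw [← this]
    exact Finset.sum_congr rfl fun i _ => by rw [sq, real_inner_comm u (b i)]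
  have hkey := key (fun i => ⟪u, b i⟫) (fun i => z u (b i)) (fun i j => z (b i) (b j))
      hZ htf hv (1 / ((n : ℝ) - 2)) (1 / (((n : ℝ) - 1) * ((n : ℝ) - 2)))
  have hL : ∑ i, ∑ j, ∑ k, (Ttensor n (fun x y => z x y) u (b i) (b j) (b k)) ^ 2
      = 2 * (1 / ((n : ℝ) - 2))^2 * (∑ i, ⟪u, b i⟫^2) * (∑ i, ∑ j, (z (b i) (b j))^2)
        + (2*(n:ℝ)*(1 / (((n : ℝ) - 1) * ((n : ℝ) - 2)))^2
            - 2*(1 / (((n : ℝ) - 1) * ((n : ℝ) - 2)))^2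
            - 2*(1 / ((n : ℝ) - 2))^2
            - 4*(1 / ((n : ℝ) - 2))*(1 / (((n : ℝ) - 1) * ((n : ℝ) - 2))))
          * (∑ i, (z u (b i))^2) := by
    rw [← hkey]
    refine Finset.sum_congr rfl fun i _ => Finset.sum_congr rfl fun j _ =>
      Finset.sum_congr rfl fun k _ => ?_
    simp only [Ttensor, wedge3, hbb]
  constructor
  · rw [hL, h2]
    field_simp
    ring
  · intro hu
    have hnu : ‖u‖ ≠ 0 := norm_ne_zero_iff.mpr hu
    have hsc : ∀ i : Fin n, z (‖u‖⁻¹ • u) (b i) = ‖u‖⁻¹ * z u (b i) := by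
      intro i; rw [map_smul]; simp
    rw [hL, h2]
    simp only [hsc, mul_pow, ← Finset.mul_sum]
    field_simp
    ring
end

section
/- Let z be a trace-free symmetric bilinear form on E, u ∈ E with u ≠ 0, and α = z(u,u)/|u|². Suppose z(u,x) = 0 for every x orthogonal to u, and z(x,y) = −(α/(n−1)) ⟨x,y⟩ for all x, y orthogonal to u. Then |z|² = (n/(n−1)) α², and consequently the structural 3-tensor T vanishes: T = 0. -/
open scoped RealInnerProductSpace

set_option maxHeartbeats 1600000 in
/-- let `z` be trace-free symmetric, `u ≠ 0`, `α = z(u,u)/|u|²`.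
If `z(u,x) = 0` for all `x ⊥ u` and `z(x,y) = −(α/(n−1))⟨x,y⟩` for all `x,y ⊥ u`,
then `|z|² = (n/(n−1)) α²` and the structural 3-tensor `T` vanishes. -/
theorem normSq_z_and_T_eq_zero {E : Type*} [NormedAddCommGroup E] [InnerProductSpace ℝ E]
    [FiniteDimensional ℝ E] {n : ℕ} (hn : 4 ≤ n) (hdim : Module.finrank ℝ E = n)
    (b : OrthonormalBasis (Fin n) ℝ E)
    (z : E →ₗ[ℝ] E →ₗ[ℝ] ℝ) (hsym : ∀ x y : E, z x y = z y x)
    (htf : ∑ i, z (b i) (b i) = 0) (u : E) (hu : u ≠ 0)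
    (hrad : ∀ x : E, ⟪u, x⟫ = 0 → z u x = 0)
    (htang : ∀ x y : E, ⟪u, x⟫ = 0 → ⟪u, y⟫ = 0 →
      z x y = -((z u u / ‖u‖ ^ 2) / ((n : ℝ) - 1)) * ⟪x, y⟫) :
    (∑ i, ∑ j, (z (b i) (b j)) ^ 2 = ((n : ℝ) / ((n : ℝ) - 1)) * (z u u / ‖u‖ ^ 2) ^ 2) ∧
    (∀ X Y Z : E, Ttensor n (fun x y => z x y) u X Y Z = 0) := by
  have hnu : ‖u‖ ≠ 0 := norm_ne_zero_iff.mpr hu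
  have hnu2 : ‖u‖ ^ 2 ≠ 0 := pow_ne_zero 2 hnu
  have hn1 : (n : ℝ) - 1 ≠ 0 := by
    have : (4 : ℝ) ≤ (n : ℝ) := by exact_mod_cast hn
    nlinarith
  have hn2 : (n : ℝ) - 2 ≠ 0 := by
    have : (4 : ℝ) ≤ (n : ℝ) := by exact_mod_cast hn
    nlinarith
  have huu : ⟪u, u⟫ = ‖u‖ ^ 2 := real_inner_self_eq_norm_sq u
  set α : ℝ := z u u / ‖u‖ ^ 2 with hα
  clear_value α
  -- the key pointwise formula
  have hz : ∀ x y : E, z x y =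
      α * (((n : ℝ) / ((n : ℝ) - 1)) * (⟪u, x⟫ * ⟪u, y⟫ / ‖u‖ ^ 2) - ⟪x, y⟫ / ((n : ℝ) - 1)) := by
    intro x y
    set cx : ℝ := ⟪u, x⟫ / ‖u‖ ^ 2 with hcx
    set cy : ℝ := ⟪u, y⟫ / ‖u‖ ^ 2 with hcy
    have hqx : ⟪u, x - cx • u⟫ = 0 := by
      rw [inner_sub_right, real_inner_smul_right, huu, hcx]
      field_simp
      ring
    have hqy : ⟪u, y - cy • u⟫ = 0 := by
      rw [inner_sub_right, real_inner_smul_right, huu, hcy]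
      field_simp
      ring
    have h1 : z u (y - cy • u) = 0 := hrad _ hqy
    have h2 : z u (x - cx • u) = 0 := hrad _ hqx
    have h3 := htang _ _ hqx hqy
    have hip : ⟪x - cx • u, y - cy • u⟫ = ⟪x, y⟫ - ⟪u, x⟫ * ⟪u, y⟫ / ‖u‖ ^ 2 := by
      rw [inner_sub_left, inner_sub_right, inner_sub_right, real_inner_smul_left,
        real_inner_smul_right, real_inner_smul_left, real_inner_smul_right, huu,
        real_inner_comm x u, hcx, hcy]
      field_simp
      ring
    have hx : x = cx • u + (x - cx • u) := by abel
    have hy : y = cy • u + (y - cy • u) := by abel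
    have expand : z x y = cx * cy * z u u + cx * z u (y - cy • u)
        + cy * z u (x - cx • u) + z (x - cx • u) (y - cy • u) := by
      conv_lhs => rw [hx, hy]
      simp only [map_add, map_smul, LinearMap.add_apply, LinearMap.smul_apply, smul_eq_mul]
      rw [hsym (x - cx • u) u]
      ring
    rw [expand, h1, h2, h3, hip, hcx, hcy, hα]
    field_simp
    ring
  have hzu : ∀ x : E, z u x = α * ⟪u, x⟫ := by
    intro x
    rw [hz u x, huu]
    field_simp
  constructor
  · -- norm square
    have key : ∀ i j, z (b i) (b j) =
        (α * (n : ℝ) / (((n : ℝ) - 1) * ‖u‖ ^ 2)) * (⟪u, b i⟫ * ⟪u, b j⟫)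
          - (α / ((n : ℝ) - 1)) * ⟪b i, b j⟫ := by
      intro i j
      rw [hz (b i) (b j)]
      field_simp
    have pars : ∀ x y : E, ∑ j, ⟪x, b j⟫ * ⟪b j, y⟫ = ⟪x, y⟫ :=
      fun x y => b.sum_inner_mul_inner x y
    set A : ℝ := α * (n : ℝ) / (((n : ℝ) - 1) * ‖u‖ ^ 2) with hA
    set B : ℝ := α / ((n : ℝ) - 1) with hB
    have inner_sum : ∀ i, ∑ j, (z (b i) (b j)) ^ 2 =
        A ^ 2 * ⟪u, b i⟫ ^ 2 * ‖u‖ ^ 2 - 2 * A * B * (⟪u, b i⟫ * ⟪u, b i⟫) + B ^ 2 * 1 := by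
      intro i
      have step : ∀ j, (z (b i) (b j)) ^ 2 =
          (A ^ 2 * ⟪u, b i⟫ ^ 2) * (⟪u, b j⟫ * ⟪b j, u⟫)
            - (2 * A * B * ⟪u, b i⟫) * (⟪u, b j⟫ * ⟪b j, b i⟫)
            + B ^ 2 * (⟪b i, b j⟫ * ⟪b j, b i⟫) := by
        intro j
        rw [key i j, real_inner_comm (b j) u, real_inner_comm (b j) (b i)]
        ring
      simp only [step]
      rw [Finset.sum_add_distrib, Finset.sum_sub_distrib, ← Finset.mul_sum, ← Finset.mul_sum,
        ← Finset.mul_sum, pars u u, pars u (b i), pars (b i) (b i), huu,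
        real_inner_self_eq_norm_sq (b i), b.orthonormal.1 i]
      norm_num
      ring
    calc ∑ i, ∑ j, (z (b i) (b j)) ^ 2
        = ∑ i, (A ^ 2 * ‖u‖ ^ 2 * (⟪u, b i⟫ * ⟪b i, u⟫)
            - 2 * A * B * (⟪u, b i⟫ * ⟪b i, u⟫) + B ^ 2 * 1) := by
          refine Finset.sum_congr rfl fun i _ => ?_
          rw [inner_sum i, real_inner_comm (b i) u]
          ring
      _ = A ^ 2 * ‖u‖ ^ 2 * ‖u‖ ^ 2 - 2 * A * B * ‖u‖ ^ 2 + B ^ 2 * (n : ℝ) := by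
          rw [Finset.sum_add_distrib, Finset.sum_sub_distrib, ← Finset.mul_sum, ← Finset.mul_sum,
            pars u u, huu, ← Finset.sum_mul, Finset.sum_const, Finset.card_univ,
            Fintype.card_fin]
          simp
          ring
      _ = ((n : ℝ) / ((n : ℝ) - 1)) * α ^ 2 := by
          rw [hA, hB]
          field_simp
          ring
  · intro X Y Z
    simp only [Ttensor, wedge3]
    rw [hz Y Z, hz X Z, hzu X, hzu Y]
    generalize (inner ℝ u X : ℝ) = p
    generalize (inner ℝ u Y : ℝ) = q
    generalize (inner ℝ u Z : ℝ) = r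
    generalize (inner ℝ Y Z : ℝ) = s
    generalize (inner ℝ X Z : ℝ) = t
    generalize hw : ‖u‖ ^ 2 = w at hnu2 ⊢
    have expand : ∀ ν α p q r s t : ℝ, ν - 1 ≠ 0 → ν - 2 ≠ 0 → w ≠ 0 →
        1/(ν-2) * (p * (α * (ν/(ν-1)*(q*r/w) - s/(ν-1))) -
            q * (α * (ν/(ν-1)*(p*r/w) - t/(ν-1))))
          + 1/((ν-1)*(ν-2)) * (α*p*s - α*q*t) = 0 := by
      intro ν α p q r s t h1 h2 h3
      field_simp
      ring
    exact expand _ _ _ _ _ _ _ hn1 hn2 hnu2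
end

section
/- Let z be a trace-free symmetric bilinear form on E, u ∈ E with u ≠ 0, and α = z(u,u)/|u|². Suppose z(u,x) = 0 for every x orthogonal to u and that the structural 3-tensor vanishes, T = 0. Then z(x,y) = −(α/(n−1)) ⟨x,y⟩ for all x, y orthogonal to u; that is, z restricted to the orthogonal complement of u is the constant multiple −α/(n−1) of the inner product. -/
open scoped RealInnerProductSpace

/-- let `z` be trace-free symmetric, `u ≠ 0`, `α = z(u,u)/|u|²`.
If `z(u,x) = 0` for all `x ⊥ u` and the structural 3-tensor `T` vanishes, then
`z(x,y) = −(α/(n−1))⟨x,y⟩` for all `x, y ⊥ u`. -/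
theorem tangential_z_of_T_eq_zero {E : Type*} [NormedAddCommGroup E] [InnerProductSpace ℝ E]
    [FiniteDimensional ℝ E] {n : ℕ} (hn : 4 ≤ n) (hdim : Module.finrank ℝ E = n)
    (b : OrthonormalBasis (Fin n) ℝ E)
    (z : E →ₗ[ℝ] E →ₗ[ℝ] ℝ) (hsym : ∀ x y : E, z x y = z y x)
    (htf : ∑ i, z (b i) (b i) = 0) (u : E) (hu : u ≠ 0)
    (hrad : ∀ x : E, ⟪u, x⟫ = 0 → z u x = 0)
    (hT : ∀ X Y Z : E, Ttensor n (fun x y => z x y) u X Y Z = 0) :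
    ∀ x y : E, ⟪u, x⟫ = 0 → ⟪u, y⟫ = 0 →
      z x y = -((z u u / ‖u‖ ^ 2) / ((n : ℝ) - 1)) * ⟪x, y⟫ := by
  intro x y hx hy
  have hT' := hT u x y
  simp only [Ttensor, wedge3] at hT'
  rw [hx, hrad x hx, real_inner_self_eq_norm_sq] at hT'
  have hnu : ‖u‖ ≠ 0 := norm_ne_zero_iff.mpr hu
  have h1 : (n : ℝ) - 1 ≠ 0 := by
    have : (4:ℝ) ≤ n := by exact_mod_cast hn
    linarith
  have h2 : (n : ℝ) - 2 ≠ 0 := by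
    have : (4:ℝ) ≤ n := by exact_mod_cast hn
    linarith
  field_simp at hT' ⊢
  have key : (‖u‖ ^ 2 * z x y * ((n:ℝ) - 1) + z u u * ⟪x, y⟫) * ((n:ℝ) - 2) = 0 := by
    linear_combination ((n:ℝ) - 2) * hT'
  have key2 := (mul_eq_zero.mp key).resolve_right h2
  linear_combination key2
end

section
/- Let n ≥ 2 be an integer, s > 0 a real number, and a < 0 < b real numbers. Let h : (a,b) → ℝ be any function, and let ξ : [a,b] → ℝ be continuous on [a,b], differentiable on (a,b), with ξ(t) > 0 for all t ∈ [a,b], satisfying (n−1) ξ(t) h(t) ξ′(t) = (s t / n)(1 − ξ(t)²) for every t ∈ (a,b), together with the boundary conditions ξ(a) = ξ(0) = ξ(b) = 1. Then ξ(t) = 1 for every t ∈ [a,b]. -/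
/-- let `n ≥ 2`, `s > 0`, `a < 0 < b`. Let `h` be any function on `(a,b)`
and let `ξ` be positive, continuous on `[a,b]`, differentiable on `(a,b)`, satisfy
`(n−1) ξ h ξ′ = (s t/n)(1 − ξ²)` on `(a,b)` and `ξ(a) = ξ(0) = ξ(b) = 1`.
Then `ξ ≡ 1` on `[a,b]`. -/
theorem warping_function_eq_one (n : ℕ) (hn : 2 ≤ n) (s : ℝ) (hs : 0 < s)
    (a b : ℝ) (ha : a < 0) (hb : 0 < b) (h ξ : ℝ → ℝ)
    (hcont : ContinuousOn ξ (Set.Icc a b))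
    (hdiff : ∀ t ∈ Set.Ioo a b, DifferentiableAt ℝ ξ t)
    (hpos : ∀ t ∈ Set.Icc a b, 0 < ξ t)
    (hode : ∀ t ∈ Set.Ioo a b,
      ((n : ℝ) - 1) * ξ t * h t * deriv ξ t = (s * t / n) * (1 - ξ t ^ 2))
    (hξa : ξ a = 1) (hξ0 : ξ 0 = 1) (hξb : ξ b = 1) :
    ∀ t ∈ Set.Icc a b, ξ t = 1 := by
  have hab : a ≤ b := le_of_lt (ha.trans hb)
  have hne : (Set.Icc a b).Nonempty := Set.nonempty_Icc.2 hab
  have hcpt : IsCompact (Set.Icc a b) := isCompact_Icc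
  -- key: at an interior extremum point t₀ with ξ t₀ ≠ 1, contradiction
  have key : ∀ t₀ ∈ Set.Ioo a b, t₀ ≠ 0 → deriv ξ t₀ = 0 → ξ t₀ = 1 := by
    intro t₀ ht₀ ht0 hd
    have h1 := hode t₀ ht₀
    rw [hd, mul_zero] at h1
    have hsn : s * t₀ / n ≠ 0 := by
      have hn0 : (n : ℝ) ≠ 0 := by positivity
      exact div_ne_zero (mul_ne_zero (ne_of_gt hs) ht0) hn0
    have h2 : 1 - ξ t₀ ^ 2 = 0 := by
      rcases mul_eq_zero.1 h1.symm with h | h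
      · exact absurd h hsn
      · exact h
    have hp : 0 < ξ t₀ := hpos t₀ (Set.mem_Icc.2 ⟨le_of_lt ht₀.1, le_of_lt ht₀.2⟩)
    have : ξ t₀ ^ 2 = 1 := by linarith
    nlinarith [sq_nonneg (ξ t₀ - 1), sq_nonneg (ξ t₀ + 1)]
  intro t ht
  -- upper bound
  have hub : ξ t ≤ 1 := by
    obtain ⟨m, hm, hmax⟩ := hcpt.exists_isMaxOn hne hcont
    by_contra hgt
    push_neg at hgt
    have hM : 1 < ξ m := lt_of_lt_of_le hgt (hmax ht)
    have hma : m ≠ a := fun e => by rw [e, hξa] at hM; linarith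
    have hmb : m ≠ b := fun e => by rw [e, hξb] at hM; linarith
    have hm0 : m ≠ 0 := fun e => by rw [e, hξ0] at hM; linarith
    have hmI : m ∈ Set.Ioo a b :=
      ⟨lt_of_le_of_ne hm.1 (Ne.symm hma), lt_of_le_of_ne hm.2 hmb⟩
    have hloc : IsLocalMax ξ m :=
      hmax.isLocalMax (Filter.mem_of_superset (Ioo_mem_nhds hmI.1 hmI.2) Set.Ioo_subset_Icc_self)
    have := key m hmI hm0 hloc.deriv_eq_zero
    linarith
  have hlb : 1 ≤ ξ t := by
    obtain ⟨m, hm, hmin⟩ := hcpt.exists_isMinOn hne hcont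
    by_contra hlt
    push_neg at hlt
    have hM : ξ m < 1 := lt_of_le_of_lt (hmin ht) hlt
    have hma : m ≠ a := fun e => by rw [e, hξa] at hM; linarith
    have hmb : m ≠ b := fun e => by rw [e, hξb] at hM; linarith
    have hm0 : m ≠ 0 := fun e => by rw [e, hξ0] at hM; linarith
    have hmI : m ∈ Set.Ioo a b :=
      ⟨lt_of_le_of_ne hm.1 (Ne.symm hma), lt_of_le_of_ne hm.2 hmb⟩
    have hloc : IsLocalMin ξ m :=
      hmin.isLocalMin (Filter.mem_of_superset (Ioo_mem_nhds hmI.1 hmI.2) Set.Ioo_subset_Icc_self)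
    have := key m hmI hm0 hloc.deriv_eq_zero
    linarith
  linarith
end
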